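/- Let f be a continuous transformation of a compact metric space (X,d) and μ an f-invariant Borel probability measure on X. If f is distance-expanding (there exist ε₀>0 and λ>1 such that d(f(x),f(y)) ≥ λ·d(x,y) whenever d(x,y)<ε₀) and open, then the inverse metric entropy of μ exists and h⁻_{f,B}(μ)=0. -/

import Mathlib

open MeasureTheory Filter Set

/-- The inverse limit (space of prehistories) of `(X, f)`. -/
def InvLim {X : Type*} (f : X → X) : Set (ℕ → X) :=
  {x | ∀ n, f (x (n + 1)) = x n}

/-- The induced shift map `f̂` on sequences. -/
def hatShift {X : Type*} (f : X → X) (x : ℕ → X) : ℕ → X :=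
  fun n => Nat.rec (f (x 0)) (fun k _ => x k) n

/-- The `(n, ε)`-inverse Bowen ball along the prehistory `xh`. -/
def invBowenBall {X : Type*} [PseudoMetricSpace X] (f : X → X) (xh : ℕ → X) (n : ℕ) (ε : ℝ) :
    Set X :=
  {y | ∃ yh ∈ InvLim f, yh 0 = y ∧ ∀ i ≤ n, dist (xh i) (yh i) < ε}

/-- Local lower inverse metric entropy `h⁻_{f,inf,B}(μ, xh)`. -/
noncomputable def hInvInfLoc {X : Type*} [PseudoMetricSpace X] [MeasurableSpace X]
    (f : X → X) (μ : Measure X) (xh : ℕ → X) : ℝ :=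
  ⨆ ε : {ε : ℝ // 0 < ε},
    Filter.liminf (fun n : ℕ => -Real.log ((μ (invBowenBall f xh n ε.1)).toReal) / n)
      Filter.atTop

/-- Local upper inverse metric entropy `h⁻_{f,sup,B}(μ, xh)`. -/
noncomputable def hInvSupLoc {X : Type*} [PseudoMetricSpace X] [MeasurableSpace X]
    (f : X → X) (μ : Measure X) (xh : ℕ → X) : ℝ :=
  ⨆ ε : {ε : ℝ // 0 < ε},
    Filter.limsup (fun n : ℕ => -Real.log ((μ (invBowenBall f xh n ε.1)).toReal) / n)
      Filter.atTop

/-!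
Because `f` is open and `X` is compact, every point within a uniform distance `a` of `f x`
has a preimage within `ε₀` of `x`, and since `f` does not contract at scale `ε₀`, that preimage
is no farther from `x` than the point is from `f x`. Pulling back step by step along a
prehistory `x̂` shows that the ball of radius `min a ε` about `x₀` lies in every inverse Bowen
ball `B_n^-(x̂, ε)`. When `x₀` is in the support of `μ` this ball has positive measure, so
`-log μ(B_n^-(x̂, ε)) / n → 0`. The support is `μ`-conull, so both local entropies vanish
`μ̂`-almost everywhere.
-/

open Metric Topology

theorem isClosed_invLim {X : Type*} [TopologicalSpace X] [T2Space X] {f : X → X}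
    (hf : Continuous f) : IsClosed (InvLim f) := by
  simp only [InvLim, ofPred_forall]
  exact isClosed_iInter fun n => isClosed_eq (hf.comp (continuous_apply _)) (continuous_apply _)

theorem exists_mem_invLim_of_forall_exists_preimage {X : Type*} (f : X → X)
    (P : ℕ → X → Prop) {y : X} (h0 : P 0 y)
    (step : ∀ n w, P n w → ∃ w', f w' = w ∧ P (n + 1) w') :
    ∃ yh ∈ InvLim f, yh 0 = y ∧ ∀ n, P n (yh n) := by
  let g : (n : ℕ) → {w : X // P n w} := fun n =>
    Nat.rec ⟨y, h0⟩ (fun n p => ⟨(step n p.1 p.2).choose, (step n p.1 p.2).choose_spec.2⟩) n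
  exact ⟨fun n => (g n).1, fun n => (step n (g n).1 (g n).2).choose_spec.1, rfl,
    fun n => (g n).2⟩

theorem IsOpenMap.exists_pos_forall_ball_subset_image_ball {X Y : Type*} [PseudoMetricSpace X]
    [CompactSpace X] [PseudoMetricSpace Y] {f : X → Y} (hopen : IsOpenMap f) (hf : Continuous f)
    {r : ℝ} (hr : 0 < r) : ∃ a > 0, ∀ x, ball (f x) a ⊆ f '' ball x r := by
  -- Balls of nonpositive radius are empty, so the property holds near `a = 0` on both sides.
  have hloc : ∀ x, ∀ᶠ p : ℝ × X in 𝓝 (0, x), ball (f p.2) p.1 ⊆ f '' ball p.2 r := by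
    intro x
    obtain ⟨A, hA, hAsub⟩ := isOpen_iff.1 (hopen _ isOpen_ball) (f x)
      (mem_image_of_mem f (mem_ball_self (half_pos hr)))
    have hx : ∀ᶠ x' in 𝓝 x, dist x' x < r / 2 := ball_mem_nhds x (half_pos hr)
    have hfx : ∀ᶠ x' in 𝓝 x, dist (f x') (f x) < A / 2 :=
      hf.tendsto x (ball_mem_nhds _ (half_pos hA))
    rw [nhds_prod_eq]
    filter_upwards [(eventually_lt_nhds (half_pos hA)).prod_mk (hx.and hfx)]
      with ⟨a, x'⟩ ⟨ha, hx', hfx'⟩ z hz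
    have hz' : dist z (f x) < A := by
      linarith [dist_triangle z (f x') (f x), mem_ball.1 hz]
    obtain ⟨w, hw, rfl⟩ := hAsub hz'
    refine ⟨w, mem_ball.2 ?_, rfl⟩
    linarith [dist_triangle w x x', dist_comm x' x, mem_ball.1 hw]
  have hunif := isCompact_univ.eventually_forall_of_forall_eventually
    (P := fun a x => ball (f x) a ⊆ f '' ball x r) fun x _ => hloc x
  obtain ⟨a, h, ha⟩ := ((hunif.filter_mono nhdsWithin_le_nhds).and
    (self_mem_nhdsWithin : ∀ᶠ a in 𝓝[>] (0 : ℝ), 0 < a)).exists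
  exact ⟨a, ha, fun x => h x (mem_univ x)⟩

theorem tendsto_neg_log_measure_div_atTop_zero {α : Type*} [MeasurableSpace α] {μ : Measure α}
    [IsProbabilityMeasure μ] {s : ℕ → Set α} {t : Set α} (ht : μ t ≠ 0)
    (hts : ∀ n, t ⊆ s n) :
    Tendsto (fun n : ℕ => -Real.log (μ (s n)).toReal / n) atTop (𝓝 0) := by
  have htpos : 0 < (μ t).toReal := ENNReal.toReal_pos ht (measure_ne_top μ t)
  have hlog_le : ∀ n, Real.log (μ t).toReal ≤ Real.log (μ (s n)).toReal := fun n =>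
    Real.log_le_log htpos (ENNReal.toReal_mono (measure_ne_top μ _) (measure_mono (hts n)))
  have hlog_nonpos : ∀ n, Real.log (μ (s n)).toReal ≤ 0 := fun n =>
    Real.log_nonpos ENNReal.toReal_nonneg measureReal_le_one
  refine tendsto_of_tendsto_of_tendsto_of_le_of_le tendsto_const_nhds
    (tendsto_const_div_atTop_nhds_zero_nat (-Real.log (μ t).toReal))
    (fun n => div_nonneg (neg_nonneg.2 (hlog_nonpos n)) n.cast_nonneg)
    (fun n => div_le_div_of_nonneg_right (neg_le_neg (hlog_le n)) n.cast_nonneg)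

section Expanding

variable {X : Type*} [PseudoMetricSpace X] {f : X → X} {ε₀ a : ℝ}

theorem exists_preimage_dist_le (hexp : ∀ x y, dist x y < ε₀ → dist x y ≤ dist (f x) (f y))
    (hsub : ∀ x, ball (f x) a ⊆ f '' ball x ε₀) {x w : X} (hw : dist w (f x) < a) :
    ∃ w', f w' = w ∧ dist w' x ≤ dist w (f x) := by
  obtain ⟨w', hw', rfl⟩ := hsub x hw
  exact ⟨w', rfl, hexp w' x hw'⟩

theorem ball_subset_invBowenBall
    (hexp : ∀ x y, dist x y < ε₀ → dist x y ≤ dist (f x) (f y))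
    (hsub : ∀ x, ball (f x) a ⊆ f '' ball x ε₀) {xh : ℕ → X} (hxh : xh ∈ InvLim f)
    {δ ε : ℝ} (hδa : δ ≤ a) (hδε : δ ≤ ε) (n : ℕ) :
    ball (xh 0) δ ⊆ invBowenBall f xh n ε := by
  intro y hy
  have step : ∀ i w, dist w (xh i) < δ → ∃ w', f w' = w ∧ dist w' (xh (i + 1)) < δ := by
    intro i w hw
    rw [← hxh i] at hw
    obtain ⟨w', hfw', hdist⟩ := exists_preimage_dist_le hexp hsub (hw.trans_le hδa)
    exact ⟨w', hfw', hdist.trans_lt hw⟩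
  obtain ⟨yh, hyh, rfl, hclose⟩ :=
    exists_mem_invLim_of_forall_exists_preimage f (fun i w => dist w (xh i) < δ) hy step
  exact ⟨yh, hyh, rfl, fun i _ => by rw [dist_comm]; exact (hclose i).trans_le hδε⟩

theorem tendsto_neg_log_measure_invBowenBall_div [MeasurableSpace X]
    (hexp : ∀ x y, dist x y < ε₀ → dist x y ≤ dist (f x) (f y))
    (hsub : ∀ x, ball (f x) a ⊆ f '' ball x ε₀) (ha : 0 < a) {μ : Measure X}
    [IsProbabilityMeasure μ] {xh : ℕ → X} (hxh : xh ∈ InvLim f) (hsupp : xh 0 ∈ μ.support)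
    {ε : ℝ} (hε : 0 < ε) :
    Tendsto (fun n : ℕ => -Real.log (μ (invBowenBall f xh n ε)).toReal / n) atTop (𝓝 0) :=
  tendsto_neg_log_measure_div_atTop_zero
    ((μ.mem_support_iff_forall _).1 hsupp _ (ball_mem_nhds _ (lt_min ha hε))).ne'
    (ball_subset_invBowenBall hexp hsub hxh (min_le_left a ε) (min_le_right a ε))

end Expanding

section LocalEntropy

variable {X : Type*} [PseudoMetricSpace X] [MeasurableSpace X] {f : X → X} {μ : Measure X}
  {xh : ℕ → X}

theorem hInvInfLoc_eq_zero_of_tendsto (h : ∀ ε > 0,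
    Tendsto (fun n : ℕ => -Real.log (μ (invBowenBall f xh n ε)).toReal / n) atTop (𝓝 0)) :
    hInvInfLoc f μ xh = 0 := by
  have : Nonempty {ε : ℝ // 0 < ε} := ⟨⟨1, one_pos⟩⟩
  simp only [hInvInfLoc, fun ε : {ε : ℝ // 0 < ε} => (h ε.1 ε.2).liminf_eq, ciSup_const]

theorem hInvSupLoc_eq_zero_of_tendsto (h : ∀ ε > 0,
    Tendsto (fun n : ℕ => -Real.log (μ (invBowenBall f xh n ε)).toReal / n) atTop (𝓝 0)) :
    hInvSupLoc f μ xh = 0 := by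
  have : Nonempty {ε : ℝ // 0 < ε} := ⟨⟨1, one_pos⟩⟩
  simp only [hInvSupLoc, fun ε : {ε : ℝ // 0 < ε} => (h ε.1 ε.2).limsup_eq, ciSup_const]

end LocalEntropy

theorem stmt2_general {X : Type*} [MetricSpace X] [CompactSpace X]
    [MeasurableSpace X] [BorelSpace X]
    (f : X → X) (hf : Continuous f)
    (hexp : ∃ ε₀ > (0 : ℝ), ∃ lam > (1 : ℝ), ∀ x y : X,
      dist x y < ε₀ → lam * dist x y ≤ dist (f x) (f y))
    (hopen : IsOpenMap f)
    (μ : Measure X) [IsProbabilityMeasure μ]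
    (ν : Measure (ℕ → X)) [IsProbabilityMeasure ν]
    (hν₂ : ν.map (fun xh => xh 0) = μ)
    (hν₃ : ν (InvLim f) = 1) :
    (∫ xh, hInvInfLoc f μ xh ∂ν) = 0 ∧ (∫ xh, hInvSupLoc f μ xh ∂ν) = 0 := by
  obtain ⟨ε₀, hε₀, lam, hlam, hexp⟩ := hexp
  have hnoncontract : ∀ x y, dist x y < ε₀ → dist x y ≤ dist (f x) (f y) := fun x y h =>
    (le_mul_of_one_le_left dist_nonneg hlam.le).trans (hexp x y h)
  obtain ⟨a, ha, hsub⟩ := hopen.exists_pos_forall_ball_subset_image_ball hf hε₀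
  have hinvLim : ∀ᵐ xh ∂ν, xh ∈ InvLim f :=
    (ae_mem_iff_measure_eq (isClosed_invLim hf).measurableSet.nullMeasurableSet).2
      (by rw [hν₃, measure_univ])
  have hsupp : ∀ᵐ xh ∂ν, xh 0 ∈ μ.support :=
    ae_of_ae_map (measurable_pi_apply 0).aemeasurable (hν₂ ▸ μ.support_mem_ae)
  have hzero : ∀ᵐ xh ∂ν, hInvInfLoc f μ xh = 0 ∧ hInvSupLoc f μ xh = 0 := by
    filter_upwards [hinvLim, hsupp] with xh hxh hxh0
    have h := fun ε (hε : 0 < ε) =>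
      tendsto_neg_log_measure_invBowenBall_div hnoncontract hsub ha hxh hxh0 hε
    exact ⟨hInvInfLoc_eq_zero_of_tendsto h, hInvSupLoc_eq_zero_of_tendsto h⟩
  exact ⟨integral_eq_zero_of_ae (hzero.mono fun _ h => h.1),
    integral_eq_zero_of_ae (hzero.mono fun _ h => h.2)⟩

/-- If `f` is a continuous, distance-expanding, open map of a compact
metric space and `μ` is an `f`-invariant Borel probability measure, then the inverse
metric entropy of `μ` exists and `h⁻_{f,B}(μ) = 0`: the integrals over the inverse limit
(against a lift `ν = μ̂` of `μ`) of both the lower and upper local inverse metric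
entropies vanish. -/
theorem stmt2 {X : Type*} [MetricSpace X] [CompactSpace X]
    [MeasurableSpace X] [BorelSpace X]
    (f : X → X) (hf : Continuous f)
    (hexp : ∃ ε₀ > (0 : ℝ), ∃ lam > (1 : ℝ), ∀ x y : X,
      dist x y < ε₀ → lam * dist x y ≤ dist (f x) (f y))
    (hopen : IsOpenMap f)
    (μ : Measure X) [IsProbabilityMeasure μ] (hμ : MeasurePreserving f μ μ)
    (ν : Measure (ℕ → X)) [IsProbabilityMeasure ν]
    (hν₁ : MeasurePreserving (hatShift f) ν ν)
    (hν₂ : ν.map (fun xh => xh 0) = μ)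
    (hν₃ : ν (InvLim f) = 1) :
    (∫ xh, hInvInfLoc f μ xh ∂ν) = 0 ∧ (∫ xh, hInvSupLoc f μ xh ∂ν) = 0 :=
  stmt2_general f hf hexp hopen μ ν hν₂ hν₃
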